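/- arXiv:0803.1333 — 2 statements merged into one kernel-verified Lean document; each statement's English description precedes it below -/
import Mathlib

section
/- For each i ∈ {1,...,n}, the i-th systole function syst_i : SL_n(ℝ) → (0,∞) is continuous, where syst_i(A) = inf { r : the real span of { v ∈ ℤ^n : |Av| < r } has dimension ≥ i }. -/
/-! If `B = M * A` with `M` invertible, then `‖B v‖ ≤ ‖M‖ ‖A v‖` for every integer
vector `v`, so every radius admissible for `A` becomes admissible for `B` after scaling by the
operator norm `‖M‖`, whence `systI B i ≤ ‖M‖ * systI A i`. Writing `B = (B A⁻¹) A` and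
`A = (A B⁻¹) B`, both operator norms tend to `‖1‖ = 1` as `B → A`, which squeezes `systI B i`
to `systI A i`. -/

open Matrix Submodule Module

/-- The Euclidean norm of a vector in `ℝⁿ`. -/
noncomputable def euclNorm {n : ℕ} (w : Fin n → ℝ) : ℝ := Real.sqrt (∑ i, (w i) ^ 2)

/-- The real vector associated to an integer vector. -/
def intVec {n : ℕ} (v : Fin n → ℤ) : Fin n → ℝ := fun i => (v i : ℝ)

/-- The systole (first minimum) of the lattice `Aℤⁿ`. -/
noncomputable def syst1 {n : ℕ} (A : Matrix (Fin n) (Fin n) ℝ) : ℝ :=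
  sInf {r : ℝ | ∃ v : Fin n → ℤ, v ≠ 0 ∧ euclNorm (A.mulVec (intVec v)) = r}

/-- The `i`-th systole (Minkowski's `i`-th successive minimum) of the lattice `Aℤⁿ`. -/
noncomputable def systI {n : ℕ} (A : Matrix (Fin n) (Fin n) ℝ) (i : ℕ) : ℝ :=
  sInf {r : ℝ | i ≤ Module.finrank ℝ (Submodule.span ℝ
    (intVec '' {v : Fin n → ℤ | euclNorm (A.mulVec (intVec v)) < r}))}

/-- The set of shortest (nonzero) integer vectors of `A`. -/
noncomputable def S1 {n : ℕ} (A : Matrix (Fin n) (Fin n) ℝ) : Set (Fin n → ℤ) :=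
  {v | v ≠ 0 ∧ euclNorm (A.mulVec (intVec v)) = syst1 A}

/-- `A` is well-rounded if its shortest vectors span `ℝⁿ`. -/
noncomputable def WellRounded {n : ℕ} (A : Matrix (Fin n) (Fin n) ℝ) : Prop :=
  Submodule.span ℝ (intVec '' S1 A) = ⊤

/-- The span of the integer vectors realized up to the `i`-th minimum. -/
noncomputable def LambdaI {n : ℕ} (A : Matrix (Fin n) (Fin n) ℝ) (i : ℕ) :
    Submodule ℝ (Fin n → ℝ) :=
  Submodule.span ℝ (intVec '' {v : Fin n → ℤ | euclNorm (A.mulVec (intVec v)) ≤ systI A i})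

/-- The real matrix associated to an element of `SL_n(ℤ)`. -/
def SLZtoR {n : ℕ} (γ : Matrix.SpecialLinearGroup (Fin n) ℤ) : Matrix (Fin n) (Fin n) ℝ :=
  (γ : Matrix (Fin n) (Fin n) ℤ).map (Int.cast)

open scoped Matrix.Norms.L2Operator
open Filter Topology

lemma euclNorm_eq_norm_toLp {n : ℕ} (w : Fin n → ℝ) : euclNorm w = ‖WithLp.toLp 2 w‖ := by
  simp [euclNorm, EuclideanSpace.norm_eq]

lemma euclNorm_mulVec_le {n : ℕ} (M : Matrix (Fin n) (Fin n) ℝ) (w : Fin n → ℝ) :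
    euclNorm (M *ᵥ w) ≤ ‖M‖ * euclNorm w := by
  simpa [euclNorm_eq_norm_toLp] using l2_opNorm_mulVec M (WithLp.toLp 2 w)

section systSet

variable {n : ℕ} (A : Matrix (Fin n) (Fin n) ℝ) (i : ℕ)

def systSet : Set ℝ :=
  {r | i ≤ finrank ℝ
    (span ℝ (intVec '' {v : Fin n → ℤ | euclNorm (A *ᵥ intVec v) < r}))}

lemma systI_eq_sInf_systSet : systI A i = sInf (systSet A i) := rfl

variable {A i}

lemma pos_of_mem_systSet (hi : 1 ≤ i) {r : ℝ} (hr : r ∈ systSet A i) : 0 < r := by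
  by_contra! hr0
  have : {v : Fin n → ℤ | euclNorm (A *ᵥ intVec v) < r} = ∅ :=
    Set.eq_empty_of_forall_notMem fun v hv => (hv.trans_le hr0).not_ge (Real.sqrt_nonneg _)
  change i ≤ finrank ℝ (span ℝ (intVec '' _)) at hr
  rw [this, Set.image_empty, span_empty, finrank_bot] at hr
  omega

lemma systSet_bddBelow (hi : 1 ≤ i) : BddBelow (systSet A i) :=
  ⟨0, fun _ hr => (pos_of_mem_systSet hi hr).le⟩

lemma systSet_nonempty (hin : i ≤ n) : (systSet A i).Nonempty := by
  set R := 1 + ∑ j, euclNorm (A *ᵥ intVec (Pi.single j 1))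
  refine ⟨R, ?_⟩
  suffices span ℝ (intVec '' {v : Fin n → ℤ | euclNorm (A *ᵥ intVec v) < R}) = ⊤ by
    change i ≤ finrank ℝ _
    rwa [this, finrank_top, finrank_fin_fun]
  rw [eq_top_iff, ← (Pi.basisFun ℝ (Fin n)).span_eq, span_le]
  rintro _ ⟨j, rfl⟩
  refine subset_span ⟨Pi.single j 1, ?_, ?_⟩
  · have := Finset.single_le_sum (f := fun k => euclNorm (A *ᵥ intVec (Pi.single k 1)))
      (fun k _ => Real.sqrt_nonneg _) (Finset.mem_univ j)
    exact this.trans_lt (lt_one_add _)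
  · ext k
    simp [intVec, Pi.single_apply]

end systSet

lemma systI_le_mul_of_forall_le {n i : ℕ} (hi : 1 ≤ i) (hin : i ≤ n)
    {A B : Matrix (Fin n) (Fin n) ℝ} {c : ℝ} (hc : 0 < c)
    (h : ∀ v : Fin n → ℤ, euclNorm (B *ᵥ intVec v) ≤ c * euclNorm (A *ᵥ intVec v)) :
    systI B i ≤ c * systI A i := by
  have mul_mem : ∀ r ∈ systSet A i, c * r ∈ systSet B i := fun r hr =>
    hr.trans <| finrank_mono <| span_mono <| Set.image_mono fun v hv =>
      (h v).trans_lt ((mul_lt_mul_iff_right₀ hc).2 hv)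
  rw [systI_eq_sInf_systSet, systI_eq_sInf_systSet, ← div_le_iff₀' hc]
  refine le_csInf (systSet_nonempty hin) fun r hr => ?_
  rw [div_le_iff₀' hc]
  exact csInf_le (systSet_bddBelow hi) (mul_mem r hr)

lemma systI_mul_le {n i : ℕ} (hi : 1 ≤ i) (hin : i ≤ n)
    {M : Matrix (Fin n) (Fin n) ℝ} (hM : IsUnit M) (A : Matrix (Fin n) (Fin n) ℝ) :
    systI (M * A) i ≤ ‖M‖ * systI A i := by
  have : Nonempty (Fin n) := ⟨⟨0, by omega⟩⟩
  refine systI_le_mul_of_forall_le hi hin (norm_pos_iff.2 hM.ne_zero) fun v => ?_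
  rw [← mulVec_mulVec]
  exact euclNorm_mulVec_le M _

theorem continuousOn_systI {n i : ℕ} (hi : 1 ≤ i) (hin : i ≤ n) :
    ContinuousOn (systI · i) {A : Matrix (Fin n) (Fin n) ℝ | IsUnit A} := by
  have : Nonempty (Fin n) := ⟨⟨0, by omega⟩⟩
  intro a (ha : IsUnit a)
  have upper : ∀ B : Matrix (Fin n) (Fin n) ℝ, IsUnit B →
      systI B i ≤ ‖B * Ring.inverse a‖ * systI a i := fun B hB => by
    simpa [mul_assoc, Ring.inverse_mul_cancel _ ha] using
      systI_mul_le hi hin (hB.mul ha.ringInverse) a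
  have lower : ∀ B : Matrix (Fin n) (Fin n) ℝ, IsUnit B →
      systI a i / ‖a * Ring.inverse B‖ ≤ systI B i := fun B hB => by
    have hM := ha.mul hB.ringInverse
    rw [div_le_iff₀' (norm_pos_iff.2 hM.ne_zero)]
    simpa [mul_assoc, Ring.inverse_mul_cancel _ hB] using systI_mul_le hi hin hM B
  have lim_upper : Tendsto (fun B => ‖B * Ring.inverse a‖ * systI a i) (𝓝 a)
      (𝓝 (systI a i)) := by
    simpa [Ring.mul_inverse_cancel _ ha] using
      ((continuous_mul_const (Ring.inverse a)).norm.mul_const (systI a i)).tendsto a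
  have lim_lower : Tendsto (fun B => systI a i / ‖a * Ring.inverse B‖) (𝓝 a)
      (𝓝 (systI a i)) := by
    have inverse_tendsto : Tendsto Ring.inverse (𝓝 a) (𝓝 (Ring.inverse a)) :=
      ha.unit_spec ▸ NormedRing.inverse_continuousAt ha.unit
    simpa [Pi.div_def, Ring.mul_inverse_cancel _ ha] using tendsto_const_nhds.div
      (inverse_tendsto.const_mul a).norm (by simp [Ring.mul_inverse_cancel _ ha])
  exact tendsto_of_tendsto_of_tendsto_of_le_of_le' (lim_lower.mono_left nhdsWithin_le_nhds)
    (lim_upper.mono_left nhdsWithin_le_nhds)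
    (eventually_nhdsWithin_of_forall lower) (eventually_nhdsWithin_of_forall upper)

/-- the `i`-th systole function is continuous on `SL_n(ℝ)`. -/
theorem stmt6 (n : ℕ) (i : ℕ) (h1 : 1 ≤ i) (h2 : i ≤ n) :
    Continuous fun A : {A : Matrix (Fin n) (Fin n) ℝ // A.det = 1} => systI A.1 i :=
  (continuousOn_systI h1 h2).comp_continuous continuous_subtype_val fun A =>
    (isUnit_iff_isUnit_det _).2 (by rw [A.2]; exact isUnit_one)
end

section
/- With Φ_t as defined via the successive minima decomposition, if A ∈ SL_n(ℝ) is well-rounded (Λ₁(A) = ℝ^n) then Φ_t(A) = A for all t ≥ 0; and if A is not well-rounded then for every v ∈ Λ₁(A) ∩ ℤ^n, lim_{t→∞} |Φ_t(A)v| = 0. -/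
open Matrix Submodule Module

/-- The element of Euclidean space associated to a vector in `ℝⁿ`. -/
noncomputable def vecE {n : ℕ} (w : Fin n → ℝ) : EuclideanSpace ℝ (Fin n) :=
  (WithLp.equiv 2 (Fin n → ℝ)).symm w

/-- `Λ_i(A)` as a subspace of Euclidean space, with `Λ₀(A) = 0`. -/
noncomputable def LambdaE {n : ℕ} (A : Matrix (Fin n) (Fin n) ℝ) :
    ℕ → Submodule ℝ (EuclideanSpace ℝ (Fin n))
  | 0 => ⊥
  | (i + 1) => Submodule.span ℝ ((fun v : Fin n → ℤ => vecE (intVec v)) ''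
      {v : Fin n → ℤ | euclNorm (A.mulVec (intVec v)) ≤ systI A (i + 1)})

/-- `Θ_i(A) = (AΛ_{i-1}(A))^⊥ ∩ (AΛ_i(A))`. -/
noncomputable def ThetaE {n : ℕ} (A : Matrix (Fin n) (Fin n) ℝ) (i : ℕ) :
    Submodule ℝ (EuclideanSpace ℝ (Fin n)) :=
  ((LambdaE A (i - 1)).map (Matrix.toEuclideanLin A))ᗮ ⊓
    (LambdaE A i).map (Matrix.toEuclideanLin A)

/-- The normalization factor `c(A,t) = (∏ᵢ systᵢ(A)^{t·dim Θᵢ(A)})^{1/n}`. -/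
noncomputable def cNorm {n : ℕ} (A : Matrix (Fin n) (Fin n) ℝ) (t : ℝ) : ℝ :=
  (∏ i ∈ Finset.Icc 1 n,
      systI A i ^ (t * (Module.finrank ℝ (ThetaE A i) : ℝ))) ^ ((1 : ℝ) / n)

/-- The linear map `Φ_t(A) : x ↦ c(A,t)⁻¹ ∑ᵢ systᵢ(A)^t π_{Θᵢ(A)}(Ax)`. -/
noncomputable def PhiLin {n : ℕ} (A : Matrix (Fin n) (Fin n) ℝ) (t : ℝ) :
    EuclideanSpace ℝ (Fin n) →ₗ[ℝ] EuclideanSpace ℝ (Fin n) :=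
  (cNorm A t)⁻¹ • ∑ i ∈ Finset.Icc 1 n, systI A i ^ t •
    ((ThetaE A i).subtype ∘ₗ (orthogonalProjection (ThetaE A i)).toLinearMap ∘ₗ
      Matrix.toEuclideanLin A)

/-!
Under an invertible `A` the integer vectors form a discrete set, so the successive minima
`systᵢ(A)` are positive, attained and nondecreasing, and the flag `Λ₁ ⊆ ⋯ ⊆ Λₙ = ℝⁿ` has
orthogonal increments `Θᵢ` whose dimensions `dᵢ` add up to `n`. Hence `c(A,t) = c(A,1)^t`, where
`c(A,1) = ∏ systᵢ^{dᵢ/n}` is a weighted geometric mean of the minima, and on `Λ₁(A)` only the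
`Θ₁`-component survives: `Φ_t(A)x = (syst₁/c(A,1))^t π_{Θ₁}(Ax)`. If `A` is well-rounded then
`Θ₁ = ℝⁿ` and `c(A,1) = syst₁`, so `Φ_t(A) = A`. Otherwise some `Θ_k` with `k ≥ 2` is nonzero, which
forces `syst_k > syst₁` (else `Λ_k = Λ₁ = Λ_{k-1}`), so `c(A,1) > syst₁` and `(syst₁/c(A,1))^t → 0`.
-/

lemma csInf_setOf_exists_lt {α : Type*} {f : α → ℝ} {s : Set α} (hs : s.Nonempty)
    (hf : BddBelow (f '' s)) : sInf {r | ∃ a ∈ s, f a < r} = sInf (f '' s) := by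
  obtain ⟨m, hm⟩ := hf
  have hbdd : BddBelow {r | ∃ a ∈ s, f a < r} := by
    refine ⟨m, ?_⟩
    rintro r ⟨a, ha, har⟩
    exact (hm ⟨a, ha, rfl⟩).trans har.le
  obtain ⟨a, ha⟩ := hs
  refine le_antisymm (le_of_forall_gt_imp_ge_of_dense fun b hb => ?_)
    (le_csInf ⟨f a + 1, a, ha, lt_add_one _⟩ fun r ⟨a, ha, har⟩ => ?_)
  · obtain ⟨_, ⟨a, ha, rfl⟩, hab⟩ := exists_lt_of_csInf_lt (Set.Nonempty.image f ⟨a, ha⟩) hb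
    exact csInf_le hbdd ⟨a, ha, hab⟩
  · exact (csInf_le ⟨m, hm⟩ ⟨a, ha, rfl⟩).trans har.le

lemma lt_prod_pow_rpow_one_div {ι : Type*} {s : Finset ι} {x : ι → ℝ} {d : ι → ℕ} {a : ℝ}
    {N : ℕ} (ha : 0 < a) (hax : ∀ i ∈ s, a ≤ x i) (hd : ∑ i ∈ s, d i = N)
    (hk : ∃ k ∈ s, 0 < d k ∧ a < x k) : a < (∏ i ∈ s, x i ^ d i) ^ (1 / N : ℝ) := by
  obtain ⟨k, hk, hdk, hxk⟩ := hk
  have hN : 0 < N := hd ▸ hdk.trans_le (Finset.single_le_sum (fun i _ => (d i).zero_le) hk)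
  have hlt : a ^ N < ∏ i ∈ s, x i ^ d i := by
    rw [← hd, ← Finset.prod_pow_eq_pow_sum]
    exact Finset.prod_lt_prod (fun i _ => pow_pos ha _)
      (fun i hi => pow_le_pow_left₀ ha.le (hax i hi) _) ⟨k, hk, pow_lt_pow_left₀ hxk ha.le hdk.ne'⟩
  calc a = (a ^ N) ^ (1 / N : ℝ) := by
        rw [one_div, Real.pow_rpow_inv_natCast ha.le hN.ne']
    _ < _ := Real.rpow_lt_rpow (by positivity) hlt (by positivity)

section

variable {n : ℕ}

lemma euclNorm_nonneg (w : Fin n → ℝ) : 0 ≤ euclNorm w := Real.sqrt_nonneg _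

lemma euclNorm_eq_norm_vecE (w : Fin n → ℝ) : euclNorm w = ‖vecE w‖ := by
  simp [euclNorm, EuclideanSpace.norm_eq, vecE]

lemma toEuclideanLin_vecE (M : Matrix (Fin n) (Fin n) ℝ) (w : Fin n → ℝ) :
    toEuclideanLin M (vecE w) = vecE (M *ᵥ w) := rfl

lemma intVec_zero : intVec (0 : Fin n → ℤ) = 0 := by
  funext i; simp [intVec]

lemma intVec_injective : Function.Injective (intVec (n := n)) :=
  fun _ _ h => funext fun i => by simpa [intVec] using congrFun h i

lemma abs_le_euclNorm (w : Fin n → ℝ) (i : Fin n) : |w i| ≤ euclNorm w :=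
  (Real.sqrt_sq_eq_abs (w i)).symm.trans_le <| Real.sqrt_le_sqrt <|
    Finset.single_le_sum (fun j _ => sq_nonneg (w j)) (Finset.mem_univ i)

lemma one_le_euclNorm_intVec {v : Fin n → ℤ} (hv : v ≠ 0) : 1 ≤ euclNorm (intVec v) := by
  obtain ⟨i, hi⟩ := Function.ne_iff.mp hv
  calc (1 : ℝ) ≤ |(v i : ℝ)| := by exact_mod_cast Int.one_le_abs hi
    _ ≤ euclNorm (intVec v) := abs_le_euclNorm (intVec v) i

section Discreteness

variable {M : Matrix (Fin n) (Fin n) ℝ}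

lemma toEuclideanLin_bijective (hM : IsUnit M) : Function.Bijective (toEuclideanLin M) := by
  have hmulVec : Function.Bijective M.mulVec :=
    ⟨mulVec_injective_iff_isUnit.mpr hM, mulVec_surjective_iff_isUnit.mpr hM⟩
  exact (WithLp.equiv 2 _).symm.bijective.comp (hmulVec.comp (WithLp.equiv 2 _).bijective)

lemma exists_pos_euclNorm_le_mul_euclNorm_mulVec (hM : IsUnit M) :
    ∃ K > 0, ∀ w : Fin n → ℝ, euclNorm w ≤ K * euclNorm (M *ᵥ w) := by
  obtain ⟨K, hK0, hK⟩ := (toEuclideanLin M).exists_antilipschitzWith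
    (LinearMap.ker_eq_bot.mpr (toEuclideanLin_bijective hM).1)
  exact ⟨K, hK0, fun w => by
    simpa only [euclNorm_eq_norm_vecE, toEuclideanLin_vecE] using
      hK.le_mul_norm (map_zero _) (vecE w)⟩

lemma exists_pos_le_euclNorm_mulVec_intVec (hM : IsUnit M) :
    ∃ c > 0, ∀ v : Fin n → ℤ, v ≠ 0 → c ≤ euclNorm (M *ᵥ intVec v) := by
  obtain ⟨K, hK0, hK⟩ := exists_pos_euclNorm_le_mul_euclNorm_mulVec hM
  refine ⟨K⁻¹, inv_pos.mpr hK0, fun v hv => ?_⟩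
  rw [inv_le_iff_one_le_mul₀' hK0]
  exact (one_le_euclNorm_intVec hv).trans (hK _)

lemma finite_setOf_euclNorm_mulVec_intVec_le (hM : IsUnit M) (R : ℝ) :
    {v : Fin n → ℤ | euclNorm (M *ᵥ intVec v) ≤ R}.Finite := by
  obtain ⟨K, hK0, hK⟩ := exists_pos_euclNorm_le_mul_euclNorm_mulVec hM
  refine (Set.finite_Icc (fun _ => -⌈K * R⌉) fun _ => ⌈K * R⌉).subset fun v hv => ?_
  have hvi (i : Fin n) : |(v i : ℝ)| ≤ ⌈K * R⌉ := ((abs_le_euclNorm (intVec v) i).trans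
    ((hK _).trans (mul_le_mul_of_nonneg_left hv hK0.le))).trans (Int.le_ceil _)
  exact ⟨fun i => by exact_mod_cast (abs_le.mp (hvi i)).1,
    fun i => by exact_mod_cast (abs_le.mp (hvi i)).2⟩

lemma exists_gt_forall_euclNorm_mulVec_intVec_lt_imp_le (hM : IsUnit M) (s : ℝ) :
    ∃ r > s, ∀ v : Fin n → ℤ, euclNorm (M *ᵥ intVec v) < r → euclNorm (M *ᵥ intVec v) ≤ s := by
  -- `r` is the least lattice norm in `(s, s + 1]`, or `s + 1` if there is none.
  set T := insert (s + 1) ((fun v => euclNorm (M *ᵥ intVec v)) ''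
    {v | s < euclNorm (M *ᵥ intVec v) ∧ euclNorm (M *ᵥ intVec v) ≤ s + 1})
  have hT : T.Finite := ((finite_setOf_euclNorm_mulVec_intVec_le hM (s + 1)).subset
    fun v hv => hv.2).image _ |>.insert _
  obtain ⟨r, hrT, hr⟩ := Set.exists_min_image T id hT (Set.insert_nonempty _ _)
  refine ⟨r, ?_, fun v hv => ?_⟩
  · rcases hrT with rfl | ⟨w, hw, rfl⟩
    exacts [lt_add_one s, hw.1]
  · by_contra! hsv
    have hr1 : r ≤ s + 1 := hr _ (Set.mem_insert _ _)
    exact hv.not_ge (hr _ (Set.mem_insert_of_mem _ ⟨v, ⟨hsv, (hv.trans_le hr1).le⟩, rfl⟩))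

end Discreteness

section Systoles

variable {M : Matrix (Fin n) (Fin n) ℝ} {i j : ℕ} {r s : ℝ}

-- Empty for `i > n`, where `systI M i = sInf ∅ = 0`.
def systISet (M : Matrix (Fin n) (Fin n) ℝ) (i : ℕ) : Set ℝ :=
  {r | i ≤ finrank ℝ (span ℝ (intVec '' {v : Fin n → ℤ | euclNorm (M *ᵥ intVec v) < r}))}

lemma systI_eq_sInf_systISet (M : Matrix (Fin n) (Fin n) ℝ) (i : ℕ) :
    systI M i = sInf (systISet M i) := rfl

lemma mem_systISet_of_le (hr : r ∈ systISet M i) (hrs : r ≤ s) : s ∈ systISet M i :=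
  hr.trans (finrank_mono (span_mono (Set.image_mono fun _ hv => lt_of_lt_of_le hv hrs)))

lemma systISet_anti (hij : i ≤ j) : systISet M j ⊆ systISet M i := fun _ hr => hij.trans hr

lemma systISet_nonempty (M : Matrix (Fin n) (Fin n) ℝ) (hi : i ≤ n) :
    (systISet M i).Nonempty := by
  set r₀ := ∑ k, euclNorm (M *ᵥ intVec (Pi.single k 1)) + 1
  have hspan : span ℝ (intVec '' {v : Fin n → ℤ | euclNorm (M *ᵥ intVec v) < r₀}) = ⊤ := by
    rw [eq_top_iff, ← (Pi.basisFun ℝ (Fin n)).span_eq, span_le]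
    rintro _ ⟨k, rfl⟩
    refine subset_span ⟨Pi.single k 1, ?_, ?_⟩
    · have := Finset.single_le_sum (fun k _ => euclNorm_nonneg (M *ᵥ intVec (Pi.single k 1)))
        (Finset.mem_univ k)
      simp only [Set.mem_ofPred_eq]
      linarith
    · ext
      simp [intVec, Pi.single_apply]
  refine ⟨r₀, ?_⟩
  show i ≤ finrank ℝ _
  rwa [hspan, finrank_top, finrank_fin_fun]

lemma exists_ne_zero_of_mem_systISet (hi : 1 ≤ i) (hr : r ∈ systISet M i) :
    ∃ v ≠ 0, euclNorm (M *ᵥ intVec v) < r := by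
  by_contra! h
  have hspan : span ℝ (intVec '' {v : Fin n → ℤ | euclNorm (M *ᵥ intVec v) < r}) = ⊥ := by
    refine span_eq_bot.2 ?_
    rintro _ ⟨v, hv, rfl⟩
    by_cases hv0 : v = 0
    · rw [hv0, intVec_zero]
    · exact absurd hv (h v hv0).not_gt
  have hr' : i ≤ finrank ℝ _ := hr
  rw [hspan, finrank_bot] at hr'
  omega

lemma mem_systISet_one : r ∈ systISet M 1 ↔ ∃ v ≠ 0, euclNorm (M *ᵥ intVec v) < r := by
  refine ⟨exists_ne_zero_of_mem_systISet le_rfl, fun ⟨v, hv0, hv⟩ => ?_⟩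
  refine Submodule.one_le_finrank_iff.2 <| (Submodule.ne_bot_iff _).2
    ⟨intVec v, subset_span ⟨v, hv, rfl⟩, ?_⟩
  rw [← intVec_zero]
  exact intVec_injective.ne hv0

lemma nonneg_of_mem_systISet (hi : 1 ≤ i) (hr : r ∈ systISet M i) : 0 ≤ r :=
  let ⟨_, _, hv⟩ := exists_ne_zero_of_mem_systISet hi hr
  (euclNorm_nonneg _).trans hv.le

lemma systI_nonneg (hi : 1 ≤ i) : 0 ≤ systI M i :=
  Real.sInf_nonneg fun _ => nonneg_of_mem_systISet hi

lemma systI_mono (hi : 1 ≤ i) (hij : i ≤ j) (hj : j ≤ n) : systI M i ≤ systI M j :=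
  csInf_le_csInf ⟨0, fun _ => nonneg_of_mem_systISet hi⟩ (systISet_nonempty M hj)
    (systISet_anti hij)

lemma systI_pos (hM : IsUnit M) (hi : 1 ≤ i) (hin : i ≤ n) : 0 < systI M i := by
  obtain ⟨c, hc0, hc⟩ := exists_pos_le_euclNorm_mulVec_intVec hM
  refine hc0.trans_le (le_csInf (systISet_nonempty M hin) fun r hr => ?_)
  obtain ⟨v, hv0, hv⟩ := exists_ne_zero_of_mem_systISet hi hr
  exact (hc v hv0).trans hv.le

lemma le_finrank_span_le_systI (hM : IsUnit M) (hi : i ≤ n) :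
    i ≤ finrank ℝ (span ℝ (intVec '' {v : Fin n → ℤ | euclNorm (M *ᵥ intVec v) ≤ systI M i})) := by
  obtain ⟨r, hr, hgap⟩ := exists_gt_forall_euclNorm_mulVec_intVec_lt_imp_le hM (systI M i)
  obtain ⟨r', hr', hr'r⟩ := exists_lt_of_csInf_lt (systISet_nonempty M hi) hr
  exact (mem_systISet_of_le hr' hr'r.le).trans
    (finrank_mono (span_mono (Set.image_mono fun v => hgap v)))

lemma syst1_le_euclNorm {v : Fin n → ℤ} (hv : v ≠ 0) : syst1 M ≤ euclNorm (M *ᵥ intVec v) :=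
  csInf_le ⟨0, fun _ ⟨_, _, hw⟩ => hw ▸ euclNorm_nonneg _⟩ ⟨v, hv, rfl⟩

lemma systI_one_eq_syst1 (hn : 0 < n) : systI M 1 = syst1 M := by
  have hne : {v : Fin n → ℤ | v ≠ 0}.Nonempty :=
    ⟨Pi.single ⟨0, hn⟩ 1, by simp⟩
  have hsets : systISet M 1 =
      {r | ∃ v ∈ {v : Fin n → ℤ | v ≠ 0}, euclNorm (M *ᵥ intVec v) < r} :=
    Set.ext fun _ => mem_systISet_one
  rw [systI_eq_sInf_systISet, hsets, csInf_setOf_exists_lt hne]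
  · rfl
  · exact ⟨0, fun _ ⟨_, _, hw⟩ => hw ▸ euclNorm_nonneg _⟩

end Systoles

section Flag

variable {M : Matrix (Fin n) (Fin n) ℝ} {i j : ℕ}

lemma LambdaE_zero : LambdaE M 0 = ⊥ := rfl

lemma LambdaE_succ (M : Matrix (Fin n) (Fin n) ℝ) (i : ℕ) :
    LambdaE M (i + 1) =
      (span ℝ (intVec '' {v : Fin n → ℤ | euclNorm (M *ᵥ intVec v) ≤ systI M (i + 1)})).map
        ((WithLp.linearEquiv 2 ℝ (Fin n → ℝ)).symm :
          (Fin n → ℝ) →ₗ[ℝ] EuclideanSpace ℝ (Fin n)) := by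
  rw [LambdaE, map_span, Set.image_image]
  rfl

lemma LambdaE_mono (hij : i ≤ j) (hj : j ≤ n) : LambdaE M i ≤ LambdaE M j := by
  obtain _ | i := i
  · exact bot_le
  obtain ⟨j, rfl⟩ : ∃ j', j = j' + 1 := ⟨j - 1, by omega⟩
  exact span_mono (Set.image_mono fun v hv => hv.trans (systI_mono (by omega) hij hj))

lemma LambdaE_eq_top (hM : IsUnit M) (hn : 0 < n) : LambdaE M n = ⊤ := by
  obtain ⟨m, rfl⟩ : ∃ m, n = m + 1 := ⟨n - 1, by omega⟩
  refine Submodule.eq_top_of_finrank_eq (le_antisymm (Submodule.finrank_le _) ?_)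
  rw [LambdaE_succ, LinearEquiv.finrank_map_eq, finrank_euclideanSpace_fin]
  exact le_finrank_span_le_systI hM le_rfl

lemma setOf_euclNorm_mulVec_intVec_le_systI_one (hn : 0 < n) :
    {v : Fin n → ℤ | euclNorm (M *ᵥ intVec v) ≤ systI M 1} = insert 0 (S1 M) := by
  ext v
  rcases eq_or_ne v 0 with rfl | hv
  · simpa [intVec_zero, euclNorm] using systI_nonneg (M := M) le_rfl
  · simp only [Set.mem_ofPred_eq, Set.mem_insert_iff, hv, false_or, S1, ne_eq, not_false_eq_true,
      true_and, systI_one_eq_syst1 hn]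
    exact ⟨fun h => le_antisymm h (syst1_le_euclNorm hv), le_of_eq⟩

lemma LambdaE_one_eq_top_iff (hn : 0 < n) : LambdaE M 1 = ⊤ ↔ WellRounded M := by
  rw [LambdaE_succ, Submodule.map_eq_top_iff, zero_add,
    setOf_euclNorm_mulVec_intVec_le_systI_one hn, Set.image_insert_eq, intVec_zero,
    span_insert_zero, WellRounded]

end Flag

section Theta

variable {M : Matrix (Fin n) (Fin n) ℝ} {i k : ℕ}

lemma ThetaE_one (M : Matrix (Fin n) (Fin n) ℝ) :
    ThetaE M 1 = (LambdaE M 1).map (toEuclideanLin M) := by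
  rw [ThetaE, Nat.sub_self, LambdaE_zero, Submodule.map_bot, Submodule.bot_orthogonal_eq_top,
    top_inf_eq]

lemma finrank_map_LambdaE_add_finrank_ThetaE (hi : i < n) :
    finrank ℝ ((LambdaE M i).map (toEuclideanLin M)) + finrank ℝ (ThetaE M (i + 1)) =
      finrank ℝ ((LambdaE M (i + 1)).map (toEuclideanLin M)) :=
  Submodule.finrank_add_inf_finrank_orthogonal (map_mono (LambdaE_mono i.le_succ hi))

lemma sum_Icc_finrank_ThetaE {m : ℕ} (hm : m ≤ n) :
    ∑ i ∈ Finset.Icc 1 m, finrank ℝ (ThetaE M i) =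
      finrank ℝ ((LambdaE M m).map (toEuclideanLin M)) := by
  induction m with
  | zero => rw [LambdaE_zero, Submodule.map_bot, finrank_bot]; rfl
  | succ m ih =>
    rw [Finset.sum_Icc_succ_top (by omega), ih (by omega),
      finrank_map_LambdaE_add_finrank_ThetaE (by omega)]

lemma sum_finrank_ThetaE (hM : IsUnit M) (hn : 0 < n) :
    ∑ i ∈ Finset.Icc 1 n, finrank ℝ (ThetaE M i) = n := by
  rw [sum_Icc_finrank_ThetaE le_rfl, LambdaE_eq_top hM hn, Submodule.map_top,
    LinearMap.range_eq_top.2 (toEuclideanLin_bijective hM).2, finrank_top,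
    finrank_euclideanSpace_fin]

lemma ThetaE_eq_bot_of_LambdaE_eq (h : LambdaE M i = LambdaE M (i + 1)) :
    ThetaE M (i + 1) = ⊥ := by
  rw [ThetaE, Nat.add_sub_cancel, h, inf_comm, (Submodule.orthogonal_disjoint _).eq_bot]

lemma systI_one_lt_of_finrank_ThetaE_pos (hk : 2 ≤ k) (hkn : k ≤ n)
    (hd : 0 < finrank ℝ (ThetaE M k)) : systI M 1 < systI M k := by
  obtain ⟨i, rfl⟩ : ∃ i, k = i + 1 := ⟨k - 1, by omega⟩
  refine (systI_mono le_rfl (by omega) hkn).lt_of_ne fun heq => ?_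
  have hΛ : LambdaE M (i + 1) = LambdaE M (0 + 1) := by
    rw [LambdaE_succ, LambdaE_succ, zero_add, heq]
  have hflat : LambdaE M i = LambdaE M (i + 1) :=
    le_antisymm (LambdaE_mono (by omega) hkn)
      (hΛ.le.trans (LambdaE_mono (by omega) (by omega)))
  rw [ThetaE_eq_bot_of_LambdaE_eq hflat, finrank_bot] at hd
  exact hd.false

lemma exists_finrank_ThetaE_pos_of_not_wellRounded (hM : IsUnit M) (hn : 0 < n)
    (hwr : ¬ WellRounded M) : ∃ k ∈ Finset.Ioc 1 n, 0 < finrank ℝ (ThetaE M k) := by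
  have hsum := sum_finrank_ThetaE hM hn
  rw [Finset.Icc_eq_cons_Ioc hn, Finset.sum_cons] at hsum
  have h1 : finrank ℝ (ThetaE M 1) < n := by
    rw [ThetaE_one, ← (equivMapOfInjective _ (toEuclideanLin_bijective hM).1 _).finrank_eq]
    simpa using Submodule.finrank_lt (mt (LambdaE_one_eq_top_iff hn).1 hwr)
  by_contra! h
  have := Finset.sum_eq_zero fun k hk => Nat.le_zero.1 (h k hk)
  omega

lemma ThetaE_one_eq_top (hM : IsUnit M) (h : LambdaE M 1 = ⊤) : ThetaE M 1 = ⊤ := by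
  rw [ThetaE_one, h, Submodule.map_top, LinearMap.range_eq_top.2 (toEuclideanLin_bijective hM).2]

lemma ThetaE_eq_bot_of_LambdaE_one_eq_top (hM : IsUnit M) (h : LambdaE M 1 = ⊤) (hi : 2 ≤ i)
    (hin : i ≤ n) : ThetaE M i = ⊥ := by
  have hΛ : LambdaE M (i - 1) = ⊤ := top_unique (h ▸ LambdaE_mono (by omega) (by omega))
  rw [ThetaE, hΛ, Submodule.map_top,
    LinearMap.range_eq_top.2 (toEuclideanLin_bijective hM).2, Submodule.top_orthogonal_eq_bot,
    bot_inf_eq]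

lemma starProjection_ThetaE_eq_zero {x : EuclideanSpace ℝ (Fin n)} (hx : x ∈ LambdaE M 1)
    (hi : 2 ≤ i) (hin : i ≤ n) : (ThetaE M i).starProjection (toEuclideanLin M x) = 0 := by
  refine (starProjection_apply_eq_zero_iff _).2 ?_
  exact (Submodule.le_orthogonal_orthogonal _ |>.trans (orthogonal_le inf_le_left))
    (mem_map_of_mem (LambdaE_mono (by omega) (by omega) hx))

end Theta

section Normalization

variable {M : Matrix (Fin n) (Fin n) ℝ}

lemma cNorm_one_eq (M : Matrix (Fin n) (Fin n) ℝ) :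
    cNorm M 1 = (∏ i ∈ Finset.Icc 1 n, systI M i ^ finrank ℝ (ThetaE M i)) ^ (1 / n : ℝ) := by
  simp only [cNorm, one_mul, Real.rpow_natCast]

lemma cNorm_one_nonneg (M : Matrix (Fin n) (Fin n) ℝ) : 0 ≤ cNorm M 1 :=
  Real.rpow_nonneg (Finset.prod_nonneg fun _ hi =>
    Real.rpow_nonneg (systI_nonneg (Finset.mem_Icc.1 hi).1) _) _

lemma cNorm_eq_cNorm_one_rpow (M : Matrix (Fin n) (Fin n) ℝ) (t : ℝ) :
    cNorm M t = cNorm M 1 ^ t := by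
  have hs (i) (hi : i ∈ Finset.Icc 1 n) : 0 ≤ systI M i := systI_nonneg (Finset.mem_Icc.1 hi).1
  have hQ : 0 ≤ ∏ i ∈ Finset.Icc 1 n, systI M i ^ finrank ℝ (ThetaE M i) :=
    Finset.prod_nonneg fun i hi => pow_nonneg (hs i hi) _
  rw [cNorm_one_eq, ← Real.rpow_mul hQ, mul_comm, Real.rpow_mul hQ,
    ← Real.finsetProd_rpow _ _ fun i hi => pow_nonneg (hs i hi) _, cNorm]
  congr 1
  refine Finset.prod_congr rfl fun i hi => ?_
  rw [← Real.rpow_natCast, ← Real.rpow_mul (hs i hi), mul_comm]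

lemma cNorm_one_of_wellRounded (hM : IsUnit M) (hn : 0 < n) (hwr : WellRounded M) :
    cNorm M 1 = systI M 1 := by
  have hΛ := (LambdaE_one_eq_top_iff hn).2 hwr
  rw [cNorm_one_eq,
    Finset.prod_eq_single_of_mem 1 (Finset.mem_Icc.2 ⟨le_rfl, hn⟩) fun i hi hi1 => ?_,
    ThetaE_one_eq_top hM hΛ, finrank_top, finrank_euclideanSpace_fin, one_div,
    Real.pow_rpow_inv_natCast (systI_nonneg le_rfl) hn.ne']
  obtain ⟨hi0, hin⟩ := Finset.mem_Icc.1 hi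
  rw [ThetaE_eq_bot_of_LambdaE_one_eq_top hM hΛ (by omega) hin, finrank_bot, pow_zero]

lemma systI_one_lt_cNorm_one (hM : IsUnit M) (hn : 0 < n) (hwr : ¬ WellRounded M) :
    systI M 1 < cNorm M 1 := by
  obtain ⟨k, hk, hdk⟩ := exists_finrank_ThetaE_pos_of_not_wellRounded hM hn hwr
  obtain ⟨hk1, hkn⟩ := Finset.mem_Ioc.1 hk
  rw [cNorm_one_eq]
  exact lt_prod_pow_rpow_one_div (systI_pos hM le_rfl hn)
    (fun i hi => systI_mono le_rfl (Finset.mem_Icc.1 hi).1 (Finset.mem_Icc.1 hi).2)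
    (sum_finrank_ThetaE hM hn)
    ⟨k, Finset.mem_Icc.2 ⟨hk1.le, hkn⟩, hdk, systI_one_lt_of_finrank_ThetaE_pos hk1 hkn hdk⟩

end Normalization

lemma PhiLin_apply (M : Matrix (Fin n) (Fin n) ℝ) (t : ℝ) (x : EuclideanSpace ℝ (Fin n)) :
    PhiLin M t x = (cNorm M t)⁻¹ • ∑ i ∈ Finset.Icc 1 n,
      systI M i ^ t • (ThetaE M i).starProjection (toEuclideanLin M x) := by
  simp [PhiLin, LinearMap.sum_apply]

lemma PhiLin_apply_of_mem_LambdaE_one {M : Matrix (Fin n) (Fin n) ℝ} (hn : 0 < n)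
    {x : EuclideanSpace ℝ (Fin n)} (hx : x ∈ LambdaE M 1) (t : ℝ) :
    PhiLin M t x =
      (systI M 1 / cNorm M 1) ^ t • (ThetaE M 1).starProjection (toEuclideanLin M x) := by
  rw [PhiLin_apply,
    Finset.sum_eq_single_of_mem 1 (Finset.mem_Icc.2 ⟨le_rfl, hn⟩) fun i hi hi1 => ?_,
    smul_smul, cNorm_eq_cNorm_one_rpow, Real.div_rpow (systI_nonneg le_rfl) (cNorm_one_nonneg M),
    div_eq_inv_mul]
  obtain ⟨hi0, hin⟩ := Finset.mem_Icc.1 hi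
  rw [starProjection_ThetaE_eq_zero hx (by omega) hin, smul_zero]

end

/-- if `A` is well-rounded then `Φ_t(A) = A` for all `t ≥ 0`; if `A` is
not well-rounded then `|Φ_t(A)v| → 0` as `t → ∞` for every integer vector `v ∈ Λ₁(A)`. -/
theorem stmt17 (n : ℕ) (hn : 0 < n) (A : Matrix.SpecialLinearGroup (Fin n) ℝ) :
    (WellRounded (A : Matrix (Fin n) (Fin n) ℝ) →
      ∀ t : ℝ, 0 ≤ t →
        PhiLin (A : Matrix (Fin n) (Fin n) ℝ) t =
          Matrix.toEuclideanLin (A : Matrix (Fin n) (Fin n) ℝ)) ∧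
    (¬ WellRounded (A : Matrix (Fin n) (Fin n) ℝ) →
      ∀ v : Fin n → ℤ, vecE (intVec v) ∈ LambdaE (A : Matrix (Fin n) (Fin n) ℝ) 1 →
        Filter.Tendsto
          (fun t : ℝ => ‖PhiLin (A : Matrix (Fin n) (Fin n) ℝ) t (vecE (intVec v))‖)
          Filter.atTop (nhds 0)) := by
  set M : Matrix (Fin n) (Fin n) ℝ := ↑A
  have hM : IsUnit M := (isUnit_iff_isUnit_det _).2 (by simp [M])
  refine ⟨fun hwr t _ => LinearMap.ext fun x => ?_, fun hwr v hv => ?_⟩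
  · have hΛ := (LambdaE_one_eq_top_iff hn).2 hwr
    rw [PhiLin_apply_of_mem_LambdaE_one hn (hΛ ▸ mem_top) t, cNorm_one_of_wellRounded hM hn hwr,
      div_self (systI_pos hM le_rfl hn).ne', Real.one_rpow, one_smul, ThetaE_one_eq_top hM hΛ,
      starProjection_top]
    rfl
  · have hlt := systI_one_lt_cNorm_one hM hn hwr
    have hq : 0 ≤ systI M 1 / cNorm M 1 :=
      div_nonneg (systI_nonneg le_rfl) (cNorm_one_nonneg _)
    simp_rw [PhiLin_apply_of_mem_LambdaE_one hn hv, norm_smul, Real.norm_eq_abs,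
      abs_of_nonneg (Real.rpow_nonneg hq _)]
    simpa using (tendsto_rpow_atTop_of_base_lt_one _ (by linarith)
      ((div_lt_one (systI_pos hM le_rfl hn |>.trans hlt)).2 hlt)).mul_const
        ‖(ThetaE M 1).starProjection (toEuclideanLin M (vecE (intVec v)))‖
end
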